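/- Let (I, E) be a finite simple graph with weights Φ : I → ℝ, let f(x) := arctan(e^x), F(x) := ∫_{−∞}^{x} arctan(e^t) dt, and define the Bobenko–Springborn functional BS(ρ) := Σ_{{i,j}∈E} [ F(ρ_j − ρ_i) + F(ρ_i − ρ_j) − (π/2)(ρ_i + ρ_j) ] + Σ_{i∈I} Φ_i ρ_i for ρ ∈ ℝ^I. Then BS is differentiable with ∂BS/∂ρ_i = Φ_i − Σ_{j : {i,j}∈E} 2·arctan(e^{ρ_j − ρ_i}); in particular ρ is a critical point of BS if and only if Σ_{j : {i,j}∈E} 2·arctan(e^{ρ_j − ρ_i}) = Φ_i holds for every i ∈ I. -/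

import Mathlib

noncomputable section

/-- `F x = ∫_{-∞}^x arctan (e^t) dt`. -/
def Fint (x : ℝ) : ℝ := ∫ t in Set.Iio x, Real.arctan (Real.exp t)

/-- The Bobenko–Springborn functional
`BS(ρ) = Σ_{{i,j}∈E} [F(ρ_j-ρ_i) + F(ρ_i-ρ_j) - (π/2)(ρ_i+ρ_j)] + Σ_i Φ_i ρ_i`. -/
def BS {I : Type*} [Fintype I] [DecidableEq I] (G : SimpleGraph I) [DecidableRel G.Adj]
    (Φ : I → ℝ) (ρ : I → ℝ) : ℝ :=
  (∑ e ∈ G.edgeFinset,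
    Sym2.lift
      ⟨fun i j => Fint (ρ j - ρ i) + Fint (ρ i - ρ j) - Real.pi / 2 * (ρ i + ρ j),
       fun i j => by ring⟩ e)
  + ∑ i, Φ i * ρ i

/-!
Since `F' = arctan ∘ exp` (fundamental theorem of calculus; the integral converges because
`arctan (e^t) ≤ e^t`), each edge term is differentiable. Writing the sum over edges as a sum over
ordered pairs of neighbours, the derivative of `BS` at `ρ` in direction `v` is
`Σ_a Σ_{b ~ a} (arctan (e^{ρ_b - ρ_a}) (v_b - v_a) - (π/2) v_a) + Σ_i Φ_i v_i`. The identity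
`arctan (e^{-x}) = π/2 - arctan (e^x)` together with the symmetry of adjacency turns this into
`Σ_i (Φ_i - Σ_{j ~ i} 2 arctan (e^{ρ_j - ρ_i})) v_i`, from which the partial derivatives and the
critical points are read off.
-/

open Finset MeasureTheory Real Set

lemma Real.arctan_le_self {x : ℝ} (hx : 0 ≤ x) : arctan x ≤ x := by
  calc arctan x ≤ tan (arctan x) := le_tan (arctan_nonneg.mpr hx) (arctan_lt_pi_div_two x)
    _ = x := tan_arctan x

lemma Real.arctan_exp_neg (x : ℝ) : arctan (exp (-x)) = π / 2 - arctan (exp x) := by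
  rw [exp_neg, arctan_inv_of_pos (exp_pos x)]

lemma integrableOn_arctan_exp_Iic (x : ℝ) : IntegrableOn (fun t => arctan (exp t)) (Iic x) := by
  refine (integrableOn_exp_Iic x).mono' (by fun_prop) (ae_of_all _ fun t => ?_)
  rw [norm_of_nonneg (arctan_nonneg.mpr (exp_pos t).le)]
  exact arctan_le_self (exp_pos t).le

lemma Fint_eq_add_intervalIntegral (x : ℝ) :
    Fint x = Fint 0 + ∫ t in (0 : ℝ)..x, arctan (exp t) := by
  have h := intervalIntegral.integral_Iic_sub_Iic (integrableOn_arctan_exp_Iic 0)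
    (integrableOn_arctan_exp_Iic x)
  rw [integral_Iic_eq_integral_Iio, integral_Iic_eq_integral_Iio] at h
  rw [Fint, Fint, ← h, add_sub_cancel]

lemma hasDerivAt_Fint (x : ℝ) : HasDerivAt Fint (arctan (exp x)) x := by
  have hc : Continuous fun t => arctan (exp t) := by fun_prop
  rw [funext Fint_eq_add_intervalIntegral]
  exact (intervalIntegral.integral_hasDerivAt_right (hc.intervalIntegrable 0 x)
    (hc.stronglyMeasurableAtFilter _ _) hc.continuousAt).const_add _

namespace SimpleGraph
variable {V M : Type*} [Fintype V] [AddCommMonoid M] (G : SimpleGraph V) [DecidableRel G.Adj]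

theorem sum_neighborFinset_comm (g : V → V → M) :
    ∑ a, ∑ b ∈ G.neighborFinset a, g a b = ∑ a, ∑ b ∈ G.neighborFinset a, g b a :=
  Finset.sum_comm' fun a b => by simp [adj_comm]

theorem sum_darts_eq_sum_neighborFinset (g : V → V → M) :
    ∑ d : G.Dart, g d.fst d.snd = ∑ a, ∑ b ∈ G.neighborFinset a, g a b := by
  let e : G.Dart ≃ Σ a, G.neighborSet a :=
    { toFun := fun d => ⟨d.fst, d.snd, d.adj⟩
      invFun := fun s => ⟨(s.1, s.2), s.2.2⟩ }
  refine (Fintype.sum_equiv e _ (fun s => g s.1 s.2) fun _ => rfl).trans ?_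
  rw [Fintype.sum_sigma]
  simp only [neighborFinset, Finset.sum_set_coe]

theorem sum_edgeFinset_lift_add [DecidableEq V] (g : V → V → M) :
    ∑ e ∈ G.edgeFinset, Sym2.lift ⟨fun a b => g a b + g b a, fun _ _ => add_comm _ _⟩ e
      = ∑ a, ∑ b ∈ G.neighborFinset a, g a b := by
  rw [← sum_darts_eq_sum_neighborFinset,
    ← Finset.sum_fiberwise_of_maps_to (g := Dart.edge) (t := G.edgeFinset) (by simp)]
  refine Finset.sum_congr rfl fun e he => ?_
  induction e with
  | _ v w =>
    let d : G.Dart := ⟨(v, w), G.mem_edgeFinset.mp he⟩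
    rw [show s(v, w) = d.edge from rfl, Dart.edge_fiber, Finset.sum_pair d.symm_ne.symm]
    rfl

end SimpleGraph

namespace ContinuousLinearMap
variable {R ι : Type*} [CommSemiring R] [TopologicalSpace R] [IsTopologicalSemiring R]
  [Fintype ι]

theorem sum_smul_proj_apply_single [DecidableEq ι] (c : ι → R) (i : ι) :
    (∑ j, c j • proj (R := R) (φ := fun _ : ι => R) j) (Pi.single i 1) = c i := by
  simp [Pi.single_apply]

theorem sum_smul_proj_eq_zero_iff (c : ι → R) :
    ∑ j, c j • proj (R := R) (φ := fun _ : ι => R) j = 0 ↔ c = 0 := by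
  classical
  refine ⟨fun h => funext fun i => ?_, fun h => by ext; simp [h]⟩
  simpa using (sum_smul_proj_apply_single c i).symm.trans congr($h (Pi.single i 1))

end ContinuousLinearMap

section BobenkoSpringborn
variable {I : Type*} [Fintype I] (G : SimpleGraph I) [DecidableRel G.Adj] (Φ : I → ℝ)

def gradBS (ρ : I → ℝ) (i : I) : ℝ :=
  Φ i - ∑ j ∈ G.neighborFinset i, 2 * arctan (exp (ρ j - ρ i))

variable [DecidableEq I]

lemma BS_eq_sum_neighborFinset (ρ : I → ℝ) :
    BS G Φ ρ = ∑ a, ∑ b ∈ G.neighborFinset a, (Fint (ρ b - ρ a) - π / 2 * ρ a)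
      + ∑ i, Φ i * ρ i := by
  rw [BS, ← G.sum_edgeFinset_lift_add]
  congr 1
  refine sum_congr rfl fun e _ => ?_
  induction e with
  | _ a b => simp only [Sym2.lift_mk]; ring

theorem hasFDerivAt_BS (ρ : I → ℝ) :
    HasFDerivAt (BS G Φ)
      (∑ i, gradBS G Φ ρ i • (ContinuousLinearMap.proj i : (I → ℝ) →L[ℝ] ℝ)) ρ := by
  let proj : I → (I → ℝ) →L[ℝ] ℝ := ContinuousLinearMap.proj
  have hdart : ∀ a b, HasFDerivAt (fun ρ : I → ℝ => Fint (ρ b - ρ a) - π / 2 * ρ a)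
      (arctan (exp (ρ b - ρ a)) • (proj b - proj a) - (π / 2) • proj a) ρ := fun a b =>
    ((hasDerivAt_Fint _).comp_hasFDerivAt ρ ((proj b).hasFDerivAt.sub (proj a).hasFDerivAt)).sub
      ((proj a).hasFDerivAt.const_mul _)
  rw [funext (BS_eq_sum_neighborFinset G Φ)]
  refine ((HasFDerivAt.fun_sum (u := univ) fun a _ =>
      HasFDerivAt.fun_sum (u := G.neighborFinset a) fun b _ => hdart a b).add
    (HasFDerivAt.fun_sum (u := univ) fun i _ => (proj i).hasFDerivAt.const_mul (Φ i))).congr_fderiv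
    (ContinuousLinearMap.ext fun v => ?_)
  have hsplit : ∀ a b, arctan (exp (ρ b - ρ a)) * (v b - v a) - π / 2 * v a
      = arctan (exp (ρ b - ρ a)) * v b - arctan (exp (ρ a - ρ b)) * v a
        - 2 * arctan (exp (ρ b - ρ a)) * v a := fun a b => by
    rw [← neg_sub (ρ b), arctan_exp_neg]; ring
  have hswap := G.sum_neighborFinset_comm fun a b => arctan (exp (ρ b - ρ a)) * v b
  simp only [proj, add_apply, sub_apply, _root_.sum_apply, smul_apply,
    ContinuousLinearMap.proj_apply, smul_eq_mul, hsplit]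
  simp only [sum_sub_distrib, gradBS, sub_mul, sum_mul]
  linarith

theorem hasDerivAt_BS_update (ρ : I → ℝ) (i : I) :
    HasDerivAt (fun t => BS G Φ (Function.update ρ i t)) (gradBS G Φ ρ i) (ρ i) := by
  have h := (hasFDerivAt_BS G Φ ρ).comp_hasDerivAt_of_eq (ρ i) (hasDerivAt_update ρ i (ρ i))
    (Function.update_eq_self i ρ).symm
  rwa [ContinuousLinearMap.sum_smul_proj_apply_single] at h

end BobenkoSpringborn

/-- The Bobenko–Springborn functional is differentiable, its partial derivative in the
`i`-th coordinate is `Φ_i - Σ_{j : {i,j}∈E} 2 arctan (e^{ρ_j - ρ_i})`; in particular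
`ρ` is a critical point of `BS` iff `Σ_{j : {i,j}∈E} 2 arctan (e^{ρ_j - ρ_i}) = Φ_i`
for every `i`. -/
theorem BS_derivative {I : Type*} [Fintype I] [DecidableEq I]
    (G : SimpleGraph I) [DecidableRel G.Adj] (Φ : I → ℝ) :
    Differentiable ℝ (BS G Φ) ∧
    (∀ (ρ : I → ℝ) (i : I),
      HasDerivAt (fun t => BS G Φ (Function.update ρ i t))
        (Φ i - ∑ j ∈ G.neighborFinset i, 2 * Real.arctan (Real.exp (ρ j - ρ i)))
        (ρ i)) ∧
    (∀ ρ : I → ℝ,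
      fderiv ℝ (BS G Φ) ρ = 0 ↔
        ∀ i, ∑ j ∈ G.neighborFinset i, 2 * Real.arctan (Real.exp (ρ j - ρ i)) = Φ i) := by
  refine ⟨fun ρ => (hasFDerivAt_BS G Φ ρ).differentiableAt, hasDerivAt_BS_update G Φ,
    fun ρ => ?_⟩
  rw [(hasFDerivAt_BS G Φ ρ).fderiv, ContinuousLinearMap.sum_smul_proj_eq_zero_iff, funext_iff]
  exact forall_congr' fun i => sub_eq_zero.trans eq_comm
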